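/- arXiv:1202.2794 — 9 statements merged into one kernel-verified Lean document; each statement's English description precedes it below -/
import Mathlib

section
/- Let m, n be positive integers and let q_1, …, q_m be binary query vectors in {0,1}^n. If the map sending each binary vector x ∈ {0,1}^n to the vector of Hamming distances (d(x,q_1), …, d(x,q_m)) is injective on {0,1}^n, then 2^n ≤ (n+1)^m; consequently, for n ≥ 2, the query ratio satisfies m/n ≥ 1/log₂(n+1). -/
/-- If the map sending each binary vector `x ∈ {0,1}^n` to its vector of
Hamming distances to the queries `q 1, …, q m` is injective, then `2^n ≤ (n+1)^m`;
consequently, for `n ≥ 2`, the query ratio satisfies `m/n ≥ 1/log₂(n+1)`. -/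
theorem stmt0 (m n : ℕ) (hm : 0 < m) (hn : 0 < n)
    (q : Fin m → Fin n → Fin 2)
    (hinj : Function.Injective (fun x : Fin n → Fin 2 => fun i : Fin m => hammingDist x (q i))) :
    2 ^ n ≤ (n + 1) ^ m ∧
      (2 ≤ n → (m : ℝ) / (n : ℝ) ≥ 1 / Real.logb 2 ((n : ℝ) + 1)) := by
  have hcard : 2 ^ n ≤ (n + 1) ^ m := by
    have hF : Function.Injective
        (fun x : Fin n → Fin 2 => fun i : Fin m =>
          (⟨hammingDist x (q i), Nat.lt_succ_of_le (hammingDist_le_card_fintype.trans_eq (by simp))⟩ : Fin (n+1))) := by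
      intro a b hab
      apply hinj
      funext i
      have := congrFun hab i
      exact Fin.mk.inj_iff.mp this
    have := Fintype.card_le_of_injective _ hF
    simpa using this
  refine ⟨hcard, fun hn2 => ?_⟩
  have hlogpos : 0 < Real.logb 2 ((n : ℝ) + 1) := by
    apply Real.logb_pos (by norm_num)
    have : (1 : ℝ) ≤ (n : ℝ) := by exact_mod_cast hn
    linarith
  have hnpos : (0 : ℝ) < n := by exact_mod_cast hn
  rw [ge_iff_le, div_le_div_iff₀ hlogpos hnpos, one_mul]
  -- need n ≤ m * logb 2 (n+1)
  have hreal : (2 : ℝ) ^ n ≤ ((n : ℝ) + 1) ^ m := by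
    have := hcard
    exact_mod_cast this
  have := Real.logb_le_logb_of_le (b := 2) (by norm_num) (by positivity) hreal
  rw [Real.logb_pow, Real.logb_pow, Real.logb_self_eq_one (by norm_num)] at this
  simpa [mul_comm] using this
end

section
/- Let S_1, …, S_n be natural numbers with distinct subset sums, i.e., whenever two subsets A, B of {1,…,n} satisfy ∑_{j∈A} S_j = ∑_{j∈B} S_j then A = B. Let m be such that S_j < 2^m for all j, and define the m×n binary matrix Q by letting Q_{ij} be the i-th bit in the binary expansion of S_j (so that S_j = ∑_{i=0}^{m-1} Q_{ij} 2^i). Then Q is uniquely identifying (UI). -/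
lemma bits_sum (m : ℕ) : ∀ k : ℕ, k < 2 ^ m →
    k = ∑ i ∈ Finset.range m, if k.testBit i then 2 ^ i else 0 := by
  induction m with
  | zero => intro k hk; simpa using Nat.lt_one_iff.mp hk
  | succ m ih =>
      intro k hk
      rw [Finset.sum_range_succ']
      have h2 : k / 2 < 2 ^ m := by
        rw [Nat.div_lt_iff_lt_mul (by norm_num)]
        calc k < 2 ^ (m+1) := hk
          _ = 2 ^ m * 2 := by ring
      have hrec := ih (k / 2) h2
      have htb : ∀ i, k.testBit (i + 1) = (k / 2).testBit i := by
        intro i; rw [Nat.testBit_succ]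
      have hsum : (∑ i ∈ Finset.range m, if k.testBit (i + 1) then 2 ^ (i+1) else 0)
          = 2 * ∑ i ∈ Finset.range m, if (k/2).testBit i then 2 ^ i else 0 := by
        rw [Finset.mul_sum]
        apply Finset.sum_congr rfl
        intro i _
        rw [htb i]
        split <;> ring
      rw [hsum, ← hrec]
      have h0 : (if k.testBit 0 then 2 ^ 0 else 0) = k % 2 := by
        rcases Nat.mod_two_eq_zero_or_one k with h | h <;> simp [Nat.testBit_zero, h]
      rw [h0]
      omega

/-- If `S 1, …, S n` are natural numbers with distinct subset sums,
`S j < 2^m` for all `j`, and `Q` is the `m×n` binary matrix whose `j`-th column is the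
`m`-bit binary expansion of `S j`, then `Q` is uniquely identifying. -/
theorem stmt3 (m n : ℕ) (S : Fin n → ℕ)
    (hdss : ∀ A B : Finset (Fin n), (∑ j ∈ A, S j) = (∑ j ∈ B, S j) → A = B)
    (hbound : ∀ j, S j < 2 ^ m)
    (Q : Matrix (Fin m) (Fin n) ℤ)
    (hQ : ∀ (i : Fin m) (j : Fin n), Q i j = if Nat.testBit (S j) i.val then 1 else 0) :
    ∀ z : Fin n → ℤ, (∀ j, z j = -1 ∨ z j = 0 ∨ z j = 1) → Q.mulVec z = 0 → z = 0 := by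
  intro z hz hQz
  -- column expansion : (S j : ℤ) = ∑ i, Q i j * 2 ^ i
  have hcol : ∀ j, (S j : ℤ) = ∑ i : Fin m, Q i j * 2 ^ (i : ℕ) := by
    intro j
    have h1 := bits_sum m (S j) (hbound j)
    have h2 : ((S j : ℕ) : ℤ) =
        ((∑ i ∈ Finset.range m, if (S j).testBit i then 2 ^ i else 0 : ℕ) : ℤ) := by
      exact_mod_cast congrArg (Nat.cast : ℕ → ℤ) h1
    push_cast at h2
    rw [h2, ← Fin.sum_univ_eq_sum_range (fun i => if (S j).testBit i then (2:ℤ) ^ i else 0)]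
    apply Finset.sum_congr rfl
    intro i _
    rw [hQ i j]
    split <;> ring
  -- total sum is zero
  have hsum0 : ∑ j : Fin n, z j * (S j : ℤ) = 0 := by
    calc ∑ j : Fin n, z j * (S j : ℤ)
        = ∑ j : Fin n, ∑ i : Fin m, z j * (Q i j * 2 ^ (i:ℕ)) := by
          apply Finset.sum_congr rfl; intro j _; rw [hcol j, Finset.mul_sum]
      _ = ∑ i : Fin m, (∑ j : Fin n, Q i j * z j) * 2 ^ (i:ℕ) := by
          rw [Finset.sum_comm]
          apply Finset.sum_congr rfl; intro i _
          rw [Finset.sum_mul]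
          apply Finset.sum_congr rfl; intro j _; ring
      _ = 0 := by
          apply Finset.sum_eq_zero
          intro i _
          have : Q.mulVec z i = 0 := congrFun hQz i
          rw [Matrix.mulVec, dotProduct] at this
          simp only [this, zero_mul]
  -- split into positive and negative parts
  set A := Finset.univ.filter (fun j => z j = 1) with hA
  set B := Finset.univ.filter (fun j => z j = -1) with hB
  have hsplit : ∑ j : Fin n, z j * (S j : ℤ)
      = (∑ j ∈ A, (S j : ℤ)) - (∑ j ∈ B, (S j : ℤ)) := by
    rw [hA, hB, Finset.sum_filter, Finset.sum_filter, ← Finset.sum_sub_distrib]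
    apply Finset.sum_congr rfl
    intro j _
    rcases hz j with h | h | h <;> simp [h]
  have hAB : (∑ j ∈ A, S j) = ∑ j ∈ B, S j := by
    have : (∑ j ∈ A, (S j : ℤ)) = ∑ j ∈ B, (S j : ℤ) := by
      rw [hsplit] at hsum0; linarith
    exact_mod_cast this
  have hABeq := hdss A B hAB
  have hAempty : A = ∅ := by
    by_contra h
    obtain ⟨j, hj⟩ := Finset.nonempty_iff_ne_empty.mpr h
    have h1 : z j = 1 := (Finset.mem_filter.mp hj).2
    have hj' := hj
    rw [hABeq] at hj'
    have h2 : z j = -1 := (Finset.mem_filter.mp hj').2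
    omega
  funext j
  rcases hz j with h | h | h
  · exfalso
    have : j ∈ B := Finset.mem_filter.mpr ⟨Finset.mem_univ j, h⟩
    rw [← hABeq, hAempty] at this
    simp at this
  · exact h
  · exfalso
    have : j ∈ A := Finset.mem_filter.mpr ⟨Finset.mem_univ j, h⟩
    simp [hAempty] at this
end

section
/- Let r ≥ 2 and k = C(r,2), and let C be a k×r binary matrix whose rows are pairwise distinct and each of Hamming weight 2 (so the rows are exactly all binary r-tuples of weight 2). Let E = C·Cᵀ − 2I_k (which is a binary matrix). Then the block matrix Q₁(r) = [[I_k, C, E], [0, I_r, Cᵀ]] of size (k+r) × (2k+r) is uniquely identifying (UI). -/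
/-!
Write a kernel vector as `(x, y, w)` along the three column blocks. The second block row gives
`y = -Cᵀ w`, and substituting into the first, `E w = C Cᵀ w - 2 w = -C y - 2 w` cancels `C y`,
leaving `x = 2 w`. An entry of `w` in `{-1, 0, 1}` whose double also lies in `{-1, 0, 1}` is `0`;
hence `w = 0`, then `x = 0` and `y = 0`.
-/

namespace Matrix

variable {m n R : Type*} [Fintype m] [Fintype n]

lemma fromBlocks_one_fromCols_mulVec_sumElim [DecidableEq m] [DecidableEq n] [Ring R]
    (C : Matrix m n R) (E : Matrix m m R) (B : Matrix n m R)
    (x w : m → R) (y : n → R) :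
    fromBlocks 1 (fromCols C E) 0 (fromCols 1 B) *ᵥ Sum.elim x (Sum.elim y w) =
      Sum.elim (x + C *ᵥ y + E *ᵥ w) (y + B *ᵥ w) := by
  simp only [fromBlocks_mulVec, Sum.elim_comp_inl, Sum.elim_comp_inr, fromCols_mulVec_sumElim,
    one_mulVec, zero_mulVec, zero_add, add_assoc]

lemma eq_two_smul_of_add_mulVec_eq_zero [DecidableEq m] [Ring R]
    (C : Matrix m n R) (B : Matrix n m R) {x w : m → R} {y : n → R}
    (h₁ : x + C *ᵥ y + (C * B - 2) *ᵥ w = 0) (h₂ : y + B *ᵥ w = 0) : x = (2 : R) • w := by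
  have hCy : C *ᵥ y + C *ᵥ (B *ᵥ w) = 0 := by rw [← mulVec_add, h₂, mulVec_zero]
  rw [sub_mulVec, ← mulVec_mulVec, ofNat_mulVec] at h₁
  calc x = x + C *ᵥ y + (C *ᵥ (B *ᵥ w) - (2 : R) • w) - (C *ᵥ y + C *ᵥ (B *ᵥ w))
        + (2 : R) • w := by abel
    _ = (2 : R) • w := by rw [h₁, hCy, sub_zero, zero_add]

end Matrix

lemma Int.eq_zero_of_eq_two_mul_of_ternary {a b : ℤ} (ha : a = -1 ∨ a = 0 ∨ a = 1)
    (hb : b = -1 ∨ b = 0 ∨ b = 1) (hab : a = 2 * b) : b = 0 := by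
  omega

theorem stmt4_general (r k : ℕ)
    (C : Matrix (Fin k) (Fin r) ℤ)
    (E : Matrix (Fin k) (Fin k) ℤ)
    (hE : E = C * C.transpose - 2)
    (Q : Matrix (Fin k ⊕ Fin r) (Fin k ⊕ (Fin r ⊕ Fin k)) ℤ)
    (hQ : Q = Matrix.fromBlocks 1 (Matrix.fromCols C E) 0
      (Matrix.fromCols 1 C.transpose)) :
    ∀ z : Fin k ⊕ (Fin r ⊕ Fin k) → ℤ, (∀ j, z j = -1 ∨ z j = 0 ∨ z j = 1) →
      Q.mulVec z = 0 → z = 0 := by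
  intro z hz hQz
  obtain ⟨x, y, w, rfl⟩ : ∃ x y w, z = Sum.elim x (Sum.elim y w) :=
    ⟨_, _, _, by ext (i | i | i) <;> rfl⟩
  rw [hQ, hE, Matrix.fromBlocks_one_fromCols_mulVec_sumElim, ← Sum.elim_zero_zero,
    Sum.elim_eq_iff] at hQz
  obtain ⟨hx, hy⟩ := hQz
  have hxw := Matrix.eq_two_smul_of_add_mulVec_eq_zero C C.transpose hx hy
  have hw : w = 0 := funext fun i =>
    Int.eq_zero_of_eq_two_mul_of_ternary (hz (.inl i)) (hz (.inr (.inr i))) (congrFun hxw i)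
  subst hw
  rw [smul_zero] at hxw
  rw [Matrix.mulVec_zero, add_zero] at hy
  simp only [hxw, hy, Sum.elim_zero_zero]

/-- For `r ≥ 2`, `k = C(r,2)`, and `C` a `k×r` binary matrix with pairwise
distinct rows each of Hamming weight 2, letting `E = C·Cᵀ − 2·I_k`, the block matrix
`Q₁(r) = [[I_k, C, E], [0, I_r, Cᵀ]]` is uniquely identifying. -/
theorem stmt4 (r k : ℕ) (hr : 2 ≤ r) (hk : k = r.choose 2)
    (C : Matrix (Fin k) (Fin r) ℤ)
    (hCbin : ∀ i j, C i j = 0 ∨ C i j = 1)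
    (hdistinct : Function.Injective (fun i : Fin k => (fun j => C i j)))
    (hweight : ∀ i, (∑ j, C i j) = 2)
    (E : Matrix (Fin k) (Fin k) ℤ)
    (hE : E = C * C.transpose - 2)
    (Q : Matrix (Fin k ⊕ Fin r) (Fin k ⊕ (Fin r ⊕ Fin k)) ℤ)
    (hQ : Q = Matrix.fromBlocks 1 (Matrix.fromCols C E) 0
      (Matrix.fromCols 1 C.transpose)) :
    ∀ z : Fin k ⊕ (Fin r ⊕ Fin k) → ℤ, (∀ j, z j = -1 ∨ z j = 0 ∨ z j = 1) →
      Q.mulVec z = 0 → z = 0 :=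
  stmt4_general r k C E hE Q hQ
end

section
/- Let r ≥ 2 and k = C(r,2), let C be a k×r binary matrix whose rows are pairwise distinct and each of Hamming weight 2, let E = C·Cᵀ − 2I_k, and let Q₁(r) = [[I_k, C, E], [0, I_r, Cᵀ]] be the corresponding (k+r) × (2k+r) block matrix. Then for every nonzero vector x ∈ {-1,0,1}^{2k+r}, the integer vector Q₁(r)·x has at least one entry not divisible by 4. -/
/-!
Split `x = (a, b, c)` along the column blocks and put `w = b + Cᵀ c`. Since `E = C Cᵀ - 2`, the two
row blocks of `Q₁(r) x` are `a - 2c + C w` and `w`. If both vanish modulo 4, then `w ≡ 0`, hence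
`C w ≡ 0` and `a ≡ 2c (mod 4)`; for entries in `{-1, 0, 1}` this forces `a = c = 0`, and then
`b = w ≡ 0` forces `b = 0`.
-/

open Matrix

lemma fromBlocks_fromCols_mulVec_sumElim {R m n : Type*} [CommRing R] [Fintype m] [Fintype n]
    [DecidableEq m] [DecidableEq n] (C : Matrix m n R) (a c : m → R) (b : n → R) :
    fromBlocks 1 (fromCols C (C * Cᵀ - 2)) 0 (fromCols 1 Cᵀ) *ᵥ Sum.elim a (Sum.elim b c) =
      Sum.elim (a - 2 • c + C *ᵥ (b + Cᵀ *ᵥ c)) (b + Cᵀ *ᵥ c) := by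
  rw [fromBlocks_mulVec]
  simp only [Sum.elim_comp_inl, Sum.elim_comp_inr, fromCols_mulVec_sumElim, one_mulVec,
    zero_mulVec, zero_add, sub_mulVec, ← mulVec_mulVec, mulVec_add, ofNat_mulVec]
  congr 1
  module

lemma dvd_mulVec_apply {α m n : Type*} [CommSemiring α] [Fintype n] {d : α} (M : Matrix m n α)
    {w : n → α} (hw : ∀ j, d ∣ w j) (i : m) : d ∣ (M *ᵥ w) i :=
  Finset.dvd_sum fun j _ => (hw j).mul_left _

lemma Int.eq_zero_of_four_dvd {t : ℤ} (ht : t = -1 ∨ t = 0 ∨ t = 1) (h4 : 4 ∣ t) : t = 0 := by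
  omega

lemma Int.eq_zero_of_four_dvd_sub_two_mul {s t : ℤ} (hs : s = -1 ∨ s = 0 ∨ s = 1)
    (ht : t = -1 ∨ t = 0 ∨ t = 1) (h4 : 4 ∣ s - 2 * t) : s = 0 ∧ t = 0 := by
  omega

theorem stmt6_general (r k : ℕ)
    (C : Matrix (Fin k) (Fin r) ℤ)
    (E : Matrix (Fin k) (Fin k) ℤ)
    (hE : E = C * C.transpose - 2)
    (Q : Matrix (Fin k ⊕ Fin r) (Fin k ⊕ (Fin r ⊕ Fin k)) ℤ)
    (hQ : Q = Matrix.fromBlocks 1 (Matrix.fromCols C E) 0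
      (Matrix.fromCols 1 C.transpose)) :
    ∀ x : Fin k ⊕ (Fin r ⊕ Fin k) → ℤ, (∀ j, x j = -1 ∨ x j = 0 ∨ x j = 1) → x ≠ 0 →
      ∃ i, ¬ ((4 : ℤ) ∣ Q.mulVec x i) := by
  intro x hx hx0
  by_contra! h4
  obtain ⟨a, y, rfl⟩ : ∃ a y, x = Sum.elim a y := ⟨_, _, (Sum.elim_comp_inl_inr x).symm⟩
  obtain ⟨b, c, rfl⟩ : ∃ b c, y = Sum.elim b c := ⟨_, _, (Sum.elim_comp_inl_inr y).symm⟩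
  subst hQ hE
  rw [fromBlocks_fromCols_mulVec_sumElim] at h4
  have hw : ∀ j, 4 ∣ (b + Cᵀ *ᵥ c) j := fun j => h4 (.inr j)
  have hac : ∀ i, a i = 0 ∧ c i = 0 := fun i =>
    Int.eq_zero_of_four_dvd_sub_two_mul (hx (.inl i)) (hx (.inr (.inr i))) <| by
      simpa using (dvd_add_left (dvd_mulVec_apply C hw i)).mp (h4 (.inl i))
  have hc : c = 0 := funext fun i => (hac i).2
  have hb : b = 0 := funext fun j =>
    Int.eq_zero_of_four_dvd (hx (.inr (.inl j))) (by simpa [hc] using hw j)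
  have ha : a = 0 := funext fun i => (hac i).1
  exact hx0 (by rw [ha, hb, hc, Sum.elim_zero_zero, Sum.elim_zero_zero])

/-- With `Q₁(r)` as in Statement 4, for every nonzero `{-1,0,1}`-valued
vector `x`, the integer vector `Q₁(r)·x` has at least one entry not divisible by 4. -/
theorem stmt6 (r k : ℕ) (hr : 2 ≤ r) (hk : k = r.choose 2)
    (C : Matrix (Fin k) (Fin r) ℤ)
    (hCbin : ∀ i j, C i j = 0 ∨ C i j = 1)
    (hdistinct : Function.Injective (fun i : Fin k => (fun j => C i j)))
    (hweight : ∀ i, (∑ j, C i j) = 2)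
    (E : Matrix (Fin k) (Fin k) ℤ)
    (hE : E = C * C.transpose - 2)
    (Q : Matrix (Fin k ⊕ Fin r) (Fin k ⊕ (Fin r ⊕ Fin k)) ℤ)
    (hQ : Q = Matrix.fromBlocks 1 (Matrix.fromCols C E) 0
      (Matrix.fromCols 1 C.transpose)) :
    ∀ x : Fin k ⊕ (Fin r ⊕ Fin k) → ℤ, (∀ j, x j = -1 ∨ x j = 0 ∨ x j = 1) → x ≠ 0 →
      ∃ i, ¬ ((4 : ℤ) ∣ Q.mulVec x i) :=
  stmt6_general r k C E hE Q hQ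
end

section
/- Let s ≥ 1 and let Q be an m×n binary matrix with property P_s. Let C be an m×t binary matrix such that E := C·Cᵀ − 2^s·I_m is a binary matrix (equivalently, every row of C has Hamming weight 2^s and any two distinct rows of C have supports intersecting in at most one position). Then the block matrix Q' = [[Q, C, E], [0, I_t, Cᵀ]] of size (m+t) × (n+t+m) has property P_{s+1}. -/
/-!
Suppose every entry of `Q' z` is divisible by `2^(s+1)`, where `z = (x, y, w)`. Since
`E w = C (Cᵀ w) - 2^s w`, the top block of `Q' z` equals `Q x - 2^s w + C (y + Cᵀ w)`, and the
bottom block `y + Cᵀ w` vanishes modulo `2^(s+1)`; hence `Q x ≡ 2^s w (mod 2^(s+1))`. Reducing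
modulo `2^s` and using property `P_s` gives `x = 0`, then `2 ∣ w`, so `w = 0`, and finally
`2 ∣ y`, so `y = 0`.
-/

open Matrix

section PropertyP

variable {ι κ τ : Type*}

def IsTernary (z : κ → ℤ) : Prop := ∀ j, z j = -1 ∨ z j = 0 ∨ z j = 1

def HasPropertyP [Fintype κ] (k : ℕ) (Q : Matrix ι κ ℤ) : Prop :=
  ∀ z : κ → ℤ, IsTernary z → z ≠ 0 → ∃ i, ¬ (2 ^ k : ℤ) ∣ (Q *ᵥ z) i

theorem isTernary_sumElim {x : κ → ℤ} {y : τ → ℤ} :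
    IsTernary (Sum.elim x y) ↔ IsTernary x ∧ IsTernary y :=
  Sum.forall

theorem IsTernary.eq_zero_of_two_dvd {z : κ → ℤ} (hz : IsTernary z) (h : ∀ j, 2 ∣ z j) :
    z = 0 := by
  ext j
  have := h j
  rcases hz j with hj | hj | hj <;> rw [Pi.zero_apply] <;> omega

theorem dvd_mulVec_apply_s7 [Fintype κ] {a : ℤ} (A : Matrix ι κ ℤ) {v : κ → ℤ}
    (h : ∀ j, a ∣ v j) (i : ι) : a ∣ (A *ᵥ v) i :=
  Finset.dvd_sum fun j _ => (h j).mul_left _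

theorem mulVec_eq_of_eq_mul_transpose_sub [Fintype ι] [DecidableEq ι] [Fintype τ] {s : ℕ}
    {C : Matrix ι τ ℤ} {E : Matrix ι ι ℤ} (hE : E = C * Cᵀ - 2 ^ s) (w : ι → ℤ) :
    E *ᵥ w = C *ᵥ (Cᵀ *ᵥ w) - (2 ^ s : ℤ) • w := by
  have h2 : (2 : Matrix ι ι ℤ) ^ s = (2 ^ s : ℤ) • 1 := by
    rw [show (2 : Matrix ι ι ℤ) = (2 : ℤ) • 1 by simp, smul_pow, one_pow]
  rw [hE, sub_mulVec, mulVec_mulVec, h2, smul_mulVec, one_mulVec]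

theorem HasPropertyP.fromBlocks [Fintype ι] [DecidableEq ι] [Fintype κ] [Fintype τ]
    [DecidableEq τ] {s : ℕ} {Q : Matrix ι κ ℤ} (hQ : HasPropertyP s Q) {C : Matrix ι τ ℤ}
    {E : Matrix ι ι ℤ} (hE : E = C * Cᵀ - 2 ^ s) :
    HasPropertyP (s + 1) (Matrix.fromBlocks Q (fromCols C E) 0 (fromCols 1 Cᵀ)) := by
  intro z hz hz0
  by_contra! hdvd
  obtain ⟨x, y, w, rfl⟩ : ∃ x y w, z = Sum.elim x (Sum.elim y w) :=
    ⟨_, _, _, by ext (j | j | j) <;> rfl⟩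
  obtain ⟨hx, hy, hw⟩ : IsTernary x ∧ IsTernary y ∧ IsTernary w := by
    simpa only [isTernary_sumElim] using hz
  simp only [fromBlocks_mulVec, Sum.elim_comp_inl, Sum.elim_comp_inr, fromCols_mulVec_sumElim,
    zero_mulVec, one_mulVec, zero_add, Sum.forall, Sum.elim_inl, Sum.elim_inr] at hdvd
  obtain ⟨htop, hbot⟩ := hdvd
  have hrow : ∀ i, (2 : ℤ) ^ (s + 1) ∣ (Q *ᵥ x) i - 2 ^ s * w i := by
    intro i
    have hsplit : (Q *ᵥ x + (C *ᵥ y + E *ᵥ w)) i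
        = (Q *ᵥ x) i - 2 ^ s * w i + (C *ᵥ (y + Cᵀ *ᵥ w)) i := by
      rw [mulVec_eq_of_eq_mul_transpose_sub hE, mulVec_add]
      simp only [Pi.add_apply, Pi.sub_apply, Pi.smul_apply, smul_eq_mul]
      ring
    have := htop i
    rwa [hsplit, dvd_add_left (dvd_mulVec_apply_s7 C hbot i)] at this
  have hx0 : x = 0 := by
    by_contra hx0
    obtain ⟨i, hi⟩ := hQ x hx hx0
    have h := (pow_dvd_pow 2 s.le_succ).trans (hrow i)
    exact hi (by simpa using dvd_add h (dvd_mul_right ((2 : ℤ) ^ s) (w i)))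
  have hw0 : w = 0 := hw.eq_zero_of_two_dvd fun i => by
    have h := hrow i
    rw [hx0, mulVec_zero, Pi.zero_apply, zero_sub, dvd_neg, pow_succ] at h
    exact (mul_dvd_mul_iff_left (pow_ne_zero s two_ne_zero)).mp h
  have hy0 : y = 0 := hy.eq_zero_of_two_dvd fun j => by
    have h := hbot j
    rw [hw0, mulVec_zero, add_zero] at h
    exact (dvd_pow_self 2 s.succ_ne_zero).trans h
  exact hz0 (by rw [hx0, hy0, hw0, Sum.elim_zero_zero, Sum.elim_zero_zero])

end PropertyP

theorem stmt7_general (s m n t : ℕ)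
    (Q : Matrix (Fin m) (Fin n) ℤ)
    (hPs : ∀ z : Fin n → ℤ, (∀ j, z j = -1 ∨ z j = 0 ∨ z j = 1) → z ≠ 0 →
      ∃ i, ¬ ((2 ^ s : ℤ) ∣ Q.mulVec z i))
    (C : Matrix (Fin m) (Fin t) ℤ)
    (E : Matrix (Fin m) (Fin m) ℤ)
    (hE : E = C * C.transpose - 2 ^ s)
    (Q' : Matrix (Fin m ⊕ Fin t) (Fin n ⊕ (Fin t ⊕ Fin m)) ℤ)
    (hQ' : Q' = Matrix.fromBlocks Q (Matrix.fromCols C E) 0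
      (Matrix.fromCols 1 C.transpose)) :
    ∀ z : Fin n ⊕ (Fin t ⊕ Fin m) → ℤ, (∀ j, z j = -1 ∨ z j = 0 ∨ z j = 1) → z ≠ 0 →
      ∃ i, ¬ ((2 ^ (s + 1) : ℤ) ∣ Q'.mulVec z i) := by
  subst hQ'
  exact HasPropertyP.fromBlocks hPs hE

/-- If `Q` is an `m×n` binary matrix with property `P_s` (every nonzero
`{-1,0,1}`-valued vector `z` gives `Qz` with an entry not divisible by `2^s`), and `C` is
an `m×t` binary matrix such that `E := C·Cᵀ − 2^s·I_m` is binary, then the block matrix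
`Q' = [[Q, C, E], [0, I_t, Cᵀ]]` has property `P_{s+1}`. -/
theorem stmt7 (s m n t : ℕ) (hs : 1 ≤ s)
    (Q : Matrix (Fin m) (Fin n) ℤ)
    (hQbin : ∀ i j, Q i j = 0 ∨ Q i j = 1)
    (hPs : ∀ z : Fin n → ℤ, (∀ j, z j = -1 ∨ z j = 0 ∨ z j = 1) → z ≠ 0 →
      ∃ i, ¬ ((2 ^ s : ℤ) ∣ Q.mulVec z i))
    (C : Matrix (Fin m) (Fin t) ℤ)
    (hCbin : ∀ i j, C i j = 0 ∨ C i j = 1)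
    (E : Matrix (Fin m) (Fin m) ℤ)
    (hE : E = C * C.transpose - 2 ^ s)
    (hEbin : ∀ i j, E i j = 0 ∨ E i j = 1)
    (Q' : Matrix (Fin m ⊕ Fin t) (Fin n ⊕ (Fin t ⊕ Fin m)) ℤ)
    (hQ' : Q' = Matrix.fromBlocks Q (Matrix.fromCols C E) 0
      (Matrix.fromCols 1 C.transpose)) :
    ∀ z : Fin n ⊕ (Fin t ⊕ Fin m) → ℤ, (∀ j, z j = -1 ∨ z j = 0 ∨ z j = 1) → z ≠ 0 →
      ∃ i, ¬ ((2 ^ (s + 1) : ℤ) ∣ Q'.mulVec z i) :=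
  stmt7_general s m n t Q hPs C E hE Q' hQ'
end

section
/- Let s ≥ 1 and let Q be an m×n binary matrix with property P_s. Let C be an m×t binary matrix such that E := C·Cᵀ − 2^s·I_m is a binary matrix. Then the block matrix Q' = [[Q, C, E], [0, I_t, Cᵀ]] of size (m+t) × (n+t+m) is uniquely identifying (UI). -/
/-!
Write a kernel vector as `(x, y, w)` along the column blocks. The second block row gives
`y = -Cᵀ w`, and substituting into the first, the `C Cᵀ w` terms cancel against `E w`, leaving
`Q x = 2^s w`. So `Q x` is divisible by `2^s` entrywise, and property `P_s` forces `x = 0`;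
then `2^s w = 0` gives `w = 0`, and finally `y = 0`.
-/

open Matrix

namespace Matrix

variable {R m n t : Type*} [CommRing R] [Fintype m] [Fintype n] [Fintype t]
  [DecidableEq m] [DecidableEq t]

theorem mulVec_eq_smul_of_fromBlocks_mulVec_eq_zero (Q : Matrix m n R) (C : Matrix m t R) (c : R)
    (x : n → R) (y : t → R) (w : m → R)
    (h : fromBlocks Q (fromCols C (C * Cᵀ - c • 1)) 0 (fromCols 1 Cᵀ) *ᵥ
      Sum.elim x (Sum.elim y w) = 0) :
    Q *ᵥ x = c • w ∧ y = -(Cᵀ *ᵥ w) := by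
  rw [fromBlocks_mulVec, Sum.elim_comp_inl, Sum.elim_comp_inr, fromCols_mulVec_sumElim,
    fromCols_mulVec_sumElim, zero_mulVec, zero_add, one_mulVec, ← Sum.elim_zero_zero,
    Sum.elim_eq_iff] at h
  obtain ⟨hTop, hBottom⟩ := h
  have hy : y = -(Cᵀ *ᵥ w) := eq_neg_of_add_eq_zero_left hBottom
  refine ⟨?_, hy⟩
  rw [hy, sub_mulVec, ← mulVec_mulVec, smul_mulVec, one_mulVec, mulVec_neg] at hTop
  exact eq_of_sub_eq_zero (by rw [← hTop]; abel)

end Matrix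

theorem stmt8_general (s m n t : ℕ)
    (Q : Matrix (Fin m) (Fin n) ℤ)
    (hPs : ∀ z : Fin n → ℤ, (∀ j, z j = -1 ∨ z j = 0 ∨ z j = 1) → z ≠ 0 →
      ∃ i, ¬ ((2 ^ s : ℤ) ∣ Q.mulVec z i))
    (C : Matrix (Fin m) (Fin t) ℤ)
    (E : Matrix (Fin m) (Fin m) ℤ)
    (hE : E = C * C.transpose - 2 ^ s)
    (Q' : Matrix (Fin m ⊕ Fin t) (Fin n ⊕ (Fin t ⊕ Fin m)) ℤ)
    (hQ' : Q' = Matrix.fromBlocks Q (Matrix.fromCols C E) 0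
      (Matrix.fromCols 1 C.transpose)) :
    ∀ z : Fin n ⊕ (Fin t ⊕ Fin m) → ℤ, (∀ j, z j = -1 ∨ z j = 0 ∨ z j = 1) →
      Q'.mulVec z = 0 → z = 0 := by
  intro z hz hker
  obtain ⟨x, yw, rfl⟩ : ∃ x yw, z = Sum.elim x yw := ⟨_, _, (Sum.elim_comp_inl_inr z).symm⟩
  obtain ⟨y, w, rfl⟩ : ∃ y w, yw = Sum.elim y w := ⟨_, _, (Sum.elim_comp_inl_inr yw).symm⟩
  have hscalar : (2 : Matrix (Fin m) (Fin m) ℤ) ^ s = (2 ^ s : ℤ) • 1 := by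
    rw [← Nat.cast_ofNat (R := Matrix (Fin m) (Fin m) ℤ), ← Nat.cast_pow]
    simp
  rw [hQ', hE, hscalar] at hker
  obtain ⟨hQx, hy⟩ := mulVec_eq_smul_of_fromBlocks_mulVec_eq_zero Q C _ x y w hker
  have hx : x = 0 := by
    by_contra hne
    obtain ⟨i, hi⟩ := hPs x (fun j => hz (Sum.inl j)) hne
    exact hi ⟨w i, by rw [hQx]; rfl⟩
  have hw : w = 0 := by
    rw [hx, mulVec_zero, eq_comm, smul_eq_zero] at hQx
    exact hQx.resolve_left (pow_ne_zero s two_ne_zero)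
  rw [hx, hy, hw, mulVec_zero, neg_zero, Sum.elim_zero_zero, Sum.elim_zero_zero]

/-- If `Q` is an `m×n` binary matrix with property `P_s` and `C` is an
`m×t` binary matrix with `E := C·Cᵀ − 2^s·I_m` binary, then the block matrix
`Q' = [[Q, C, E], [0, I_t, Cᵀ]]` is uniquely identifying. -/
theorem stmt8 (s m n t : ℕ) (hs : 1 ≤ s)
    (Q : Matrix (Fin m) (Fin n) ℤ)
    (hQbin : ∀ i j, Q i j = 0 ∨ Q i j = 1)
    (hPs : ∀ z : Fin n → ℤ, (∀ j, z j = -1 ∨ z j = 0 ∨ z j = 1) → z ≠ 0 →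
      ∃ i, ¬ ((2 ^ s : ℤ) ∣ Q.mulVec z i))
    (C : Matrix (Fin m) (Fin t) ℤ)
    (hCbin : ∀ i j, C i j = 0 ∨ C i j = 1)
    (E : Matrix (Fin m) (Fin m) ℤ)
    (hE : E = C * C.transpose - 2 ^ s)
    (hEbin : ∀ i j, E i j = 0 ∨ E i j = 1)
    (Q' : Matrix (Fin m ⊕ Fin t) (Fin n ⊕ (Fin t ⊕ Fin m)) ℤ)
    (hQ' : Q' = Matrix.fromBlocks Q (Matrix.fromCols C E) 0
      (Matrix.fromCols 1 C.transpose)) :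
    ∀ z : Fin n ⊕ (Fin t ⊕ Fin m) → ℤ, (∀ j, z j = -1 ∨ z j = 0 ∨ z j = 1) →
      Q'.mulVec z = 0 → z = 0 :=
  stmt8_general s m n t Q hPs C E hE Q' hQ'
end

section
/- For every integer s ≥ 1 and every real ε > 0, there exist positive integers m, n and an m×n binary uniquely identifying (UI) matrix Q whose query ratio satisfies m/n ≤ 1/(s+1) + ε. -/
/-- The block matrix `[[0],[Q Q I],[Q J-Q 0]]`. -/
def stepQ {m n : ℕ} (Q : Matrix (Fin m) (Fin n) ℤ) :
    Matrix (Fin 1 ⊕ Fin m ⊕ Fin m) (Fin n ⊕ Fin n ⊕ Fin m) ℤ :=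
  Sum.elim (fun _ _ => 0)
    (Sum.elim
      (fun i => Sum.elim (fun j => Q i j)
        (Sum.elim (fun j => Q i j) (fun j => if i = j then 1 else 0)))
      (fun i => Sum.elim (fun j => Q i j)
        (Sum.elim (fun j => 1 - Q i j) (fun _ => 0))))

lemma stepQ_ui {m n : ℕ} (Q : Matrix (Fin m) (Fin n) ℤ)
    (i0 : Fin m) (h0 : ∀ j, Q i0 j = 0)
    (hui : ∀ z : Fin n → ℤ, (∀ j, z j = -1 ∨ z j = 0 ∨ z j = 1) → Q.mulVec z = 0 → z = 0) :
    ∀ z : Fin n ⊕ Fin n ⊕ Fin m → ℤ,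
      (∀ c, z c = -1 ∨ z c = 0 ∨ z c = 1) → (stepQ Q).mulVec z = 0 → z = 0 := by
  intro z hz h
  set u : Fin n → ℤ := fun j => z (Sum.inl j) with hu
  set v : Fin n → ℤ := fun j => z (Sum.inr (Sum.inl j)) with hv
  set w : Fin m → ℤ := fun i => z (Sum.inr (Sum.inr i)) with hw
  have hA : ∀ i : Fin m, Q.mulVec u i + Q.mulVec v i + w i = 0 := by
    intro i
    have h1 := congrFun h (Sum.inr (Sum.inl i))
    simp only [stepQ, Matrix.mulVec, dotProduct, Fintype.sum_sum_type,
      Sum.elim_inl, Sum.elim_inr, ite_mul, one_mul, zero_mul,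
      Finset.sum_ite_eq, Finset.mem_univ, if_true, Pi.zero_apply] at h1 ⊢
    linarith [h1]
  have hB : ∀ i : Fin m, Q.mulVec u i + ((∑ j, v j) - Q.mulVec v i) = 0 := by
    intro i
    have h1 := congrFun h (Sum.inr (Sum.inr i))
    simp only [stepQ, Matrix.mulVec, dotProduct, Fintype.sum_sum_type,
      Sum.elim_inl, Sum.elim_inr, sub_mul, one_mul, zero_mul,
      Finset.sum_sub_distrib, Finset.sum_const_zero, add_zero, Pi.zero_apply] at h1 ⊢
    linarith [h1]
  have hQu0 : Q.mulVec u i0 = 0 := by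
    simp [Matrix.mulVec, dotProduct, h0]
  have hQv0 : Q.mulVec v i0 = 0 := by
    simp [Matrix.mulVec, dotProduct, h0]
  have hw0 : w i0 = 0 := by have := hA i0; rw [hQu0, hQv0] at this; linarith
  have hS : (∑ j, v j) = 0 := by have := hB i0; rw [hQu0, hQv0] at this; linarith
  have hQv : ∀ i, Q.mulVec v i = 0 ∧ w i = 0 := by
    intro i
    have h1 := hA i
    have h2 := hB i
    rw [hS] at h2
    have h3 : Q.mulVec u i = Q.mulVec v i := by linarith
    have h4 : 2 * Q.mulVec v i + w i = 0 := by linarith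
    rcases hz (Sum.inr (Sum.inr i)) with hwi | hwi | hwi <;>
      · rw [show z (Sum.inr (Sum.inr i)) = w i from rfl] at hwi; omega
  have hv0 : v = 0 := by
    apply hui v (fun j => hz (Sum.inr (Sum.inl j)))
    funext i; exact (hQv i).1
  have hu0 : u = 0 := by
    apply hui u (fun j => hz (Sum.inl j))
    funext i
    have := hA i
    have := (hQv i).1
    have := (hQv i).2
    simpa using by linarith
  funext c
  rcases c with j | j | i
  · exact congrFun hu0 j
  · exact congrFun hv0 j
  · exact (hQv i).2

lemma build (k : ℕ) : ∃ (m n : ℕ) (Q : Matrix (Fin m) (Fin n) ℤ),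
    m + 1 = 3 * 2 ^ k ∧ k * 2 ^ k ≤ n ∧ 0 < n ∧
    (∀ i j, Q i j = 0 ∨ Q i j = 1) ∧
    (∃ i0, ∀ j, Q i0 j = 0) ∧
    (∀ z : Fin n → ℤ, (∀ j, z j = -1 ∨ z j = 0 ∨ z j = 1) → Q.mulVec z = 0 → z = 0) := by
  induction k with
  | zero =>
    refine ⟨2, 1, fun i _ => if i = 0 then 1 else 0, by norm_num, by norm_num, by norm_num,
      ?_, ⟨1, fun j => by norm_num⟩, ?_⟩
    · intro i j; by_cases h : i = 0 <;> simp [h]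
    · intro z hz h
      have h1 := congrFun h 0
      simp [Matrix.mulVec, dotProduct, Fin.sum_univ_one] at h1
      funext j
      have : j = 0 := Subsingleton.elim _ _
      simp [this, h1]
  | succ k ih =>
    obtain ⟨m, n, Q, hm, hn, hn0, hb, ⟨i0, h0⟩, hui⟩ := ih
    set e₁ : Fin 1 ⊕ Fin m ⊕ Fin m ≃ Fin (1 + (m + m)) :=
      (Equiv.sumCongr (Equiv.refl _) finSumFinEquiv).trans finSumFinEquiv with he₁
    set e₂ : Fin n ⊕ Fin n ⊕ Fin m ≃ Fin (n + (n + m)) :=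
      (Equiv.sumCongr (Equiv.refl _) finSumFinEquiv).trans finSumFinEquiv with he₂
    refine ⟨1 + (m + m), n + (n + m), (stepQ Q).submatrix e₁.symm e₂.symm, ?_, ?_, by omega,
      ?_, ?_, ?_⟩
    · have h2 : (2:ℕ) ^ (k+1) = 2 * 2 ^ k := by rw [pow_succ]; ring
      rw [h2]; omega
    · have h2 : (2:ℕ) ^ (k+1) = 2 * 2 ^ k := by rw [pow_succ]; ring
      have h1 : (1:ℕ) ≤ 2 ^ k := Nat.one_le_two_pow
      have : (k+1) * 2 ^ (k+1) = 2 * (k * 2 ^ k) + 2 * 2 ^ k := by rw [h2]; ring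
      rw [this]
      omega
    · intro i j
      rcases he : e₁.symm i with r | r | r <;> rcases hc : e₂.symm j with c | c | c <;>
        simp [Matrix.submatrix, stepQ, he, hc]
      · exact hb r c
      · exact hb r c
      · tauto
      · exact hb r c
      · rcases hb r c with h | h <;> simp [h]
    · refine ⟨e₁ (Sum.inl 0), fun j => ?_⟩
      simp [Matrix.submatrix, stepQ]
    · intro z hz h
      have key := stepQ_ui Q i0 h0 hui (z ∘ e₂) (fun c => hz (e₂ c)) ?_
      · funext j
        have := congrFun key (e₂.symm j)
        simpa using this
      · have h2 : ((stepQ Q).submatrix (⇑e₁.symm) ⇑e₂.symm).mulVec z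
            = (stepQ Q).mulVec (z ∘ ⇑(e₂.symm).symm) ∘ ⇑e₁.symm :=
          Matrix.submatrix_mulVec_equiv (stepQ Q) z (⇑e₁.symm) e₂.symm
        rw [h] at h2
        funext r
        have := congrFun h2.symm (e₁ r)
        simpa using this

/-- For every integer `s ≥ 1` and every real `ε > 0`, there is an `m×n`
binary uniquely identifying matrix whose query ratio satisfies `m/n ≤ 1/(s+1) + ε`. -/
theorem stmt10 (s : ℕ) (hs : 1 ≤ s) (ε : ℝ) (hε : 0 < ε) :
    ∃ (m n : ℕ) (Q : Matrix (Fin m) (Fin n) ℤ), 0 < m ∧ 0 < n ∧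
      (∀ i j, Q i j = 0 ∨ Q i j = 1) ∧
      (∀ z : Fin n → ℤ, (∀ j, z j = -1 ∨ z j = 0 ∨ z j = 1) → Q.mulVec z = 0 → z = 0) ∧
      (m : ℝ) / (n : ℝ) ≤ 1 / ((s : ℝ) + 1) + ε := by
  set k := 3 * (s + 1) with hk
  obtain ⟨m, n, Q, hm, hn, hn0, hb, _, hui⟩ := build k
  have h1 : (1:ℕ) ≤ 2 ^ k := Nat.one_le_two_pow
  have hm0 : 0 < m := by omega
  refine ⟨m, n, Q, hm0, hn0, hb, hui, ?_⟩
  have hnat : m * (s + 1) ≤ n := by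
    calc m * (s + 1) ≤ 3 * 2 ^ k * (s + 1) := Nat.mul_le_mul_right _ (by omega)
    _ = k * 2 ^ k := by rw [hk]; ring
    _ ≤ n := hn
  have hns : (0:ℝ) < (n:ℝ) := by exact_mod_cast hn0
  have hs1 : (0:ℝ) < (s:ℝ) + 1 := by positivity
  have : (m:ℝ) / n ≤ 1 / ((s:ℝ) + 1) := by
    rw [div_le_div_iff₀ hns hs1]
    have : ((m:ℝ) * ((s:ℝ) + 1)) = ((m * (s+1) : ℕ) : ℝ) := by push_cast; ring
    rw [this, one_mul]
    exact_mod_cast hnat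
  linarith
end

section
/- For every real ε > 0, there exist positive integers m, n and an m×n binary uniquely identifying (UI) matrix Q whose query ratio satisfies m/n ≤ ε. In other words, query ratios arbitrarily close to zero are achievable. -/
/-!
Lindström's doubling: if `A` is uniquely identifying, so is `[[A, A, I], [A, -A, 0]]`. For a
vector `(x, y, u)` in its kernel the bottom rows give `A x = A y`, and the top rows then say
`2 • A x + u = 0`, which for `u ∈ {-1, 0, 1}ᵐ` forces `u = 0` and `A x = A y = 0`. Starting from
the `1 × 1` matrix `(1)`, `k` doublings give a `{-1, 0, 1}`-matrix with `2ᵏ` rows and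
`(k + 2) 2ᵏ⁻¹` columns. Since `A = A⁺ - A⁻`, stacking `A⁺` on `A⁻` keeps it uniquely
identifying and makes it binary, with query ratio `4 / (k + 2)`.
-/

namespace Matrix

variable {m n m' n' : Type*}

def IsUniquelyIdentifying [Fintype n] (A : Matrix m n ℤ) : Prop :=
  ∀ z : n → ℤ, (∀ j, z j = -1 ∨ z j = 0 ∨ z j = 1) → A *ᵥ z = 0 → z = 0

def doubling [DecidableEq m] (A : Matrix m n ℤ) : Matrix (m ⊕ m) (n ⊕ (n ⊕ m)) ℤ :=
  fromBlocks A (fromCols A 1) A (fromCols (-A) 0)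

def splitSigns (A : Matrix m n ℤ) : Matrix (m ⊕ m) n ℤ :=
  fromRows (A.map (·⁺)) (A.map (·⁻))

namespace IsUniquelyIdentifying

variable [Fintype n] {A : Matrix m n ℤ}

theorem doubling [Fintype m] [DecidableEq m] (hA : A.IsUniquelyIdentifying) :
    A.doubling.IsUniquelyIdentifying := by
  intro z hz hAz
  obtain ⟨x, y, u, rfl⟩ : ∃ x y u, z = Sum.elim x (Sum.elim y u) :=
    ⟨z ∘ .inl, z ∘ .inr ∘ .inl, z ∘ .inr ∘ .inr, by ext (_ | _ | _) <;> rfl⟩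
  simp only [Matrix.doubling, fromBlocks_mulVec, Sum.elim_comp_inl, Sum.elim_comp_inr,
    fromCols_mulVec_sumElim, neg_mulVec, one_mulVec, zero_mulVec, add_zero,
    ← Sum.elim_zero_zero, Sum.elim_eq_iff] at hAz
  obtain ⟨htop, hbot⟩ := hAz
  have hxy : A *ᵥ x = A *ᵥ y := add_neg_eq_zero.mp hbot
  have hx : A *ᵥ x = 0 := by
    funext i
    have hi := congrFun htop i
    simp only [← hxy, Pi.add_apply, Pi.zero_apply] at hi ⊢
    rcases hz (.inr (.inr i)) with h | h | h <;> simp only [Sum.elim_inr] at h <;> omega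
  have hy : A *ᵥ y = 0 := hxy ▸ hx
  have hu : u = 0 := by simpa [hx, hy] using htop
  rw [hA x (fun j => hz (.inl j)) hx, hA y (fun j => hz (.inr (.inl j))) hy, hu,
    Sum.elim_zero_zero, Sum.elim_zero_zero]

theorem reindex [Fintype n'] (hA : A.IsUniquelyIdentifying) (e₁ : m ≃ m') (e₂ : n ≃ n') :
    (reindex e₁ e₂ A).IsUniquelyIdentifying := by
  intro z hz hAz
  rw [reindex_apply, submatrix_mulVec_equiv] at hAz
  have : z ∘ e₂ = 0 := hA _ (fun j => hz (e₂ j)) <| funext fun i => by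
    simpa using congrFun hAz (e₁ i)
  funext j
  simpa using congrFun this (e₂.symm j)

theorem splitSigns (hA : A.IsUniquelyIdentifying) : A.splitSigns.IsUniquelyIdentifying := by
  intro z hz hAz
  rw [Matrix.splitSigns, fromRows_mulVec, ← Sum.elim_zero_zero, Sum.elim_eq_iff] at hAz
  refine hA z hz ?_
  have hsplit : A = A.map (·⁺) - A.map (·⁻) := by
    ext i j; exact (posPart_sub_negPart (A i j)).symm
  rw [hsplit, sub_mulVec, hAz.1, hAz.2, sub_zero]

end IsUniquelyIdentifying

theorem abs_doubling_apply_le_one [DecidableEq m] {A : Matrix m n ℤ} (hA : ∀ i j, |A i j| ≤ 1) :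
    ∀ i j, |A.doubling i j| ≤ 1 := by
  rintro (i | i) (j | j | j) <;>
    simp only [doubling, fromBlocks_apply₁₁, fromBlocks_apply₁₂, fromBlocks_apply₂₁,
      fromBlocks_apply₂₂, fromCols_apply_inl, fromCols_apply_inr, neg_apply, abs_neg, one_apply,
      zero_apply, hA, abs_zero, zero_le_one]
  split_ifs <;> simp

theorem splitSigns_apply_eq_zero_or_one {A : Matrix m n ℤ} (hA : ∀ i j, |A i j| ≤ 1) :
    ∀ i j, A.splitSigns i j = 0 ∨ A.splitSigns i j = 1 := by
  rintro (i | i) j <;>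
    have := abs_le.mp (hA i j) <;>
    simp only [splitSigns, fromRows_apply_inl, fromRows_apply_inr, map_apply, posPart_def,
      negPart_def] <;>
    omega

theorem exists_abs_le_one_isUniquelyIdentifying (k : ℕ) :
    ∃ (n : ℕ) (A : Matrix (Fin (2 ^ k)) (Fin n) ℤ),
      2 * n = (k + 2) * 2 ^ k ∧ (∀ i j, |A i j| ≤ 1) ∧ A.IsUniquelyIdentifying := by
  induction k with
  | zero =>
    refine ⟨1, of fun _ _ => 1, rfl, fun _ _ => by simp, fun z _ hz => ?_⟩
    funext j
    simpa [mulVec, dotProduct, Subsingleton.elim j 0] using congrFun hz 0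
  | succ k ih =>
    obtain ⟨n, A, hn, hA₁, hA⟩ := ih
    let eRows : Fin (2 ^ k) ⊕ Fin (2 ^ k) ≃ Fin (2 ^ (k + 1)) :=
      finSumFinEquiv.trans (finCongr (by ring))
    let eCols : Fin n ⊕ (Fin n ⊕ Fin (2 ^ k)) ≃ Fin (n + (n + 2 ^ k)) :=
      (Equiv.sumCongr (Equiv.refl _) finSumFinEquiv).trans finSumFinEquiv
    refine ⟨n + (n + 2 ^ k), reindex eRows eCols A.doubling, ?_, fun i j => ?_,
      hA.doubling.reindex eRows eCols⟩
    · rw [pow_succ]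
      linarith
    · exact abs_doubling_apply_le_one hA₁ _ _

end Matrix

open Matrix in
/-- For every real `ε > 0` there is an `m×n` binary uniquely identifying
matrix whose query ratio satisfies `m/n ≤ ε`: query ratios arbitrarily close to zero
are achievable. -/
theorem stmt11 (ε : ℝ) (hε : 0 < ε) :
    ∃ (m n : ℕ) (Q : Matrix (Fin m) (Fin n) ℤ), 0 < m ∧ 0 < n ∧
      (∀ i j, Q i j = 0 ∨ Q i j = 1) ∧
      (∀ z : Fin n → ℤ, (∀ j, z j = -1 ∨ z j = 0 ∨ z j = 1) → Q.mulVec z = 0 → z = 0) ∧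
      (m : ℝ) / (n : ℝ) ≤ ε := by
  obtain ⟨k, hk⟩ := exists_nat_ge (4 / ε)
  obtain ⟨n, A, hn, hA₁, hA⟩ := exists_abs_le_one_isUniquelyIdentifying k
  have hn_pos : 0 < n := by
    have : 0 < (k + 2) * 2 ^ k := by positivity
    omega
  refine ⟨2 ^ k + 2 ^ k, n, reindex finSumFinEquiv (Equiv.refl _) A.splitSigns, by positivity,
    hn_pos, fun i j => splitSigns_apply_eq_zero_or_one hA₁ _ _,
    hA.splitSigns.reindex _ _, ?_⟩
  have hn' : 2 * (n : ℝ) = (k + 2) * 2 ^ k := by exact_mod_cast hn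
  have hεk : 4 ≤ ε * k := by rwa [div_le_iff₀ hε, mul_comm] at hk
  rw [div_le_iff₀ (by exact_mod_cast hn_pos), Nat.cast_add, Nat.cast_pow, Nat.cast_two]
  nlinarith [pow_pos (two_pos (α := ℝ)) k]
end

section
/- There is no 3×4 binary uniquely identifying (UI) matrix whose first row is the all-ones vector (1,1,1,1). -/
/-- There is no 3×4 binary uniquely identifying matrix whose first row
is the all-ones vector. -/
theorem stmt17 :
    ¬ ∃ Q : Matrix (Fin 3) (Fin 4) ℤ,
      (∀ i j, Q i j = 0 ∨ Q i j = 1) ∧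
      (∀ j, Q 0 j = 1) ∧
      (∀ z : Fin 4 → ℤ, (∀ j, z j = -1 ∨ z j = 0 ∨ z j = 1) →
        Q.mulVec z = 0 → z = 0) := by
  rintro ⟨Q, hbin, hrow0, hUI⟩
  set F : Fin 4 → Bool × Bool := fun j => (decide (Q 1 j = 1), decide (Q 2 j = 1)) with hF
  have hQ1 : ∀ j, Q 1 j = if (F j).1 then 1 else 0 := by
    intro j
    rcases hbin 1 j with h | h <;> simp [hF, h]
  have hQ2 : ∀ j, Q 2 j = if (F j).2 then 1 else 0 := by
    intro j
    rcases hbin 2 j with h | h <;> simp [hF, h]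
  by_cases hinj : Function.Injective F
  · -- F is bijective (equal cards), use the vector w ∘ F
    have hbij : Function.Bijective F :=
      (Fintype.bijective_iff_injective_and_card F).mpr ⟨hinj, by decide⟩
    set w : Bool × Bool → ℤ := fun p => if p.1 = p.2 then 1 else -1 with hw
    have hwrange : ∀ p, w p = -1 ∨ w p = 0 ∨ w p = 1 := by decide
    have hwne : ∀ p, w p ≠ 0 := by decide
    set z : Fin 4 → ℤ := fun j => w (F j) with hz
    have hker : Q.mulVec z = 0 := by
      funext i
      have key : ∀ c : Bool × Bool → ℤ,
          (∀ j, Q i j = c (F j)) → (Q.mulVec z) i = ∑ p : Bool × Bool, c p * w p := by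
        intro c hc
        simp only [Matrix.mulVec, dotProduct, hz]
        exact Fintype.sum_bijective F hbij _ _ (fun j => by rw [hc j])
      fin_cases i
      · rw [key (fun _ => 1) (fun j => hrow0 j)]; decide
      · rw [key (fun p => if p.1 then 1 else 0) hQ1]; decide
      · rw [key (fun p => if p.2 then 1 else 0) hQ2]; decide
    have h0 := hUI z (fun j => hwrange (F j)) hker
    have : z 0 = 0 := by rw [h0]; rfl
    exact hwne (F 0) this
  · -- two equal columns
    rw [Function.not_injective_iff] at hinj
    obtain ⟨j, k, hFjk, hjk⟩ := hinj
    have hcol : ∀ i, Q i j = Q i k := by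
      intro i
      fin_cases i
      · show Q 0 j = Q 0 k; rw [hrow0 j, hrow0 k]
      · show Q 1 j = Q 1 k; rw [hQ1 j, hQ1 k, hFjk]
      · show Q 2 j = Q 2 k; rw [hQ2 j, hQ2 k, hFjk]
    set z : Fin 4 → ℤ := fun m => if m = j then 1 else if m = k then -1 else 0 with hz
    have hzrange : ∀ m, z m = -1 ∨ z m = 0 ∨ z m = 1 := by
      intro m
      simp only [hz]
      by_cases h1 : m = j <;> by_cases h2 : m = k <;> simp [h1, h2, Ne.symm hjk]
    have hker : Q.mulVec z = 0 := by
      have hzs : z = (Pi.single j (1:ℤ)) - (Pi.single k (1:ℤ)) := by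
        funext m
        simp only [hz, Pi.sub_apply, Pi.single_apply]
        by_cases h1 : m = j <;> by_cases h2 : m = k
        · exact absurd (h1.symm.trans h2) hjk
        all_goals simp [h1, h2, hjk, Ne.symm hjk]
      rw [hzs, Matrix.mulVec_sub]
      funext i
      simp [Matrix.mulVec_single, hcol i]
    have h0 := hUI z hzrange hker
    have : z j = 0 := by rw [h0]; rfl
    simp [hz] at this
end
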